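/- Let E : ℂ² → (ℂ²)^{⊗7} be the isometry with E|b⟩ = |b̄⟩ (the Steane encoder), let the 49-qubit concatenated Steane code be the image of the isometry E^{⊗7} ∘ E in (ℂ²)^{⊗49}, and let Π be the orthogonal projection onto it. Then this code has distance exactly 9: for every 49-qubit Pauli operator P of weight at most 8 there is a scalar c_P ∈ ℂ with Π P Π = c_P Π, and there exists a 49-qubit Pauli operator Q of weight 9 such that Π Q Π is not a scalar multiple of Π. -/

import Mathlib

open scoped Classical
open Matrix

noncomputable section

/-- basis vector `|x⟩` -/
def bvec {α : Type*} (x : α) : α → ℂ := fun y => if y = x then 1 else 0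

/-- inner product `⟪v, w⟫` on basis-indexed amplitude vectors -/
def qInner {α : Type*} [Fintype α] (v w : α → ℂ) : ℂ :=
  ∑ x, (starRingEnd ℂ) (v x) * w x

/-- Pauli X -/
def σx : Matrix Bool Bool ℂ := Matrix.of fun a b => if a = !b then 1 else 0
/-- Pauli Y -/
def σy : Matrix Bool Bool ℂ :=
  Matrix.of fun a b => if a = !b then (if a then Complex.I else -Complex.I) else 0
/-- Pauli Z -/
def σz : Matrix Bool Bool ℂ := Matrix.of fun a b => if a = b then (if a then -1 else 1) else 0
/-- Hadamard -/
def Hgate : Matrix Bool Bool ℂ :=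
  Matrix.of fun a b => (if a && b then -1 else 1) / (Real.sqrt 2 : ℂ)
/-- phase gate S = diag(1, i) -/
def Sgate : Matrix Bool Bool ℂ :=
  Matrix.of fun a b => if a = b then (if a then Complex.I else 1) else 0
/-- Z(θ) = diag(1, e^{iθ}) -/
def Zrot (θ : ℝ) : Matrix Bool Bool ℂ :=
  Matrix.of fun a b => if a = b then (if a then Complex.exp (θ * Complex.I) else 1) else 0

/-- tensor product over `ι` of single-qubit matrices -/
def tensMat {ι : Type*} [Fintype ι] (P : ι → Matrix Bool Bool ℂ) :
    Matrix (ι → Bool) (ι → Bool) ℂ :=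
  Matrix.of fun x y => ∏ i, P i (x i) (y i)

/-- CNOT with control `i`, target `t`, in one register -/
def CNOT {ι : Type*} (i t : ι) : Matrix (ι → Bool) (ι → Bool) ℂ :=
  Matrix.of fun y x => if y = Function.update x t (xor (x i) (x t)) then 1 else 0

/-- Z(θ) applied to qubit `t` -/
def ZrotAt {ι : Type*} (θ : ℝ) (t : ι) : Matrix (ι → Bool) (ι → Bool) ℂ :=
  Matrix.of fun y x => if y = x then (if x t then Complex.exp (θ * Complex.I) else 1) else 0

/-- `parityOdd A x` : the bits of `x` indexed by `A` have odd parity -/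
def parityOdd {ι : Type*} (A : Finset ι) (x : ι → Bool) : Prop :=
  (A.filter fun i => x i = true).card % 2 = 1

/-- `∏_{i ∈ A} Z_i` -/
def ZA {ι : Type*} [Fintype ι] (A : Finset ι) : Matrix (ι → Bool) (ι → Bool) ℂ :=
  tensMat fun i => if i ∈ A then σz else 1

/-- `∏_{j ∈ B} X_j` -/
def XB {ι : Type*} [Fintype ι] (B : Finset ι) : Matrix (ι → Bool) (ι → Bool) ℂ :=
  tensMat fun j => if j ∈ B then σx else 1

/-- the joint `+1`-eigenspace of a set of matrices, as a submodule -/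
def jointFixed {ι : Type*} [Fintype ι] (S : Set (Matrix (ι → Bool) (ι → Bool) ℂ)) :
    Submodule ℂ ((ι → Bool) → ℂ) where
  carrier := {v | ∀ g ∈ S, g.mulVec v = v}
  add_mem' := by
    intro a b ha hb g hg
    rw [Matrix.mulVec_add, ha g hg, hb g hg]
  zero_mem' := by
    intro g hg
    rw [Matrix.mulVec_zero]
  smul_mem' := by
    intro c a ha g hg
    rw [Matrix.mulVec_smul, ha g hg]

/-- a matrix on qubits `ι` acts only on the qubits in `A` (identity elsewhere) -/
def ActsOnlyOn {ι : Type*} (M : Matrix (ι → Bool) (ι → Bool) ℂ) (A : Set ι) : Prop :=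
  ∃ W : Matrix (A → Bool) (A → Bool) ℂ,
    ∀ x y, M x y =
      if ∀ i, i ∉ A → x i = y i then W (fun i => x i.val) (fun i => y i.val) else 0

/-- an `ι`-qubit Pauli operator `i^c · ⨂_i P_i` -/
structure PauliOp (ι : Type*) [Fintype ι] where
  phase : Fin 4
  fac : ι → Matrix Bool Bool ℂ
  isPauli : ∀ i, fac i = 1 ∨ fac i = σx ∨ fac i = σy ∨ fac i = σz

def PauliOp.toMatrix {ι : Type*} [Fintype ι] (p : PauliOp ι) :
    Matrix (ι → Bool) (ι → Bool) ℂ :=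
  Complex.I ^ (p.phase : ℕ) • tensMat p.fac

/-- number of non-identity tensor factors -/
def PauliOp.weight {ι : Type*} [Fintype ι] (p : PauliOp ι) : ℕ :=
  Set.ncard {i | p.fac i ≠ 1}

/-- tensor product of states of two registers -/
def tens2 {ι κ : Type*} (v : (ι → Bool) → ℂ) (w : (κ → Bool) → ℂ) :
    (ι → Bool) × (κ → Bool) → ℂ :=
  fun p => v p.1 * w p.2

/-- CNOT with control qubit `i` of the first register and target qubit `j` of the second -/
def CNOT2 {ι κ : Type*} (i : ι) (j : κ) :
    Matrix ((ι → Bool) × (κ → Bool)) ((ι → Bool) × (κ → Bool)) ℂ :=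
  Matrix.of fun y x =>
    if y = (x.1, Function.update x.2 j (xor (x.1 i) (x.2 j))) then 1 else 0

-- Steane code
def steaneGen : Fin 3 → (Fin 7 → Bool) :=
  ![![false, false, false, true, true, true, true],
    ![false, true, true, false, false, true, true],
    ![true, false, true, false, true, false, true]]

/-- the binary [7,3] code generated by 0001111, 0110011, 1010101 -/
def hammingC : Set (Fin 7 → Bool) :=
  {c | ∃ a b e : Bool,
    c = fun i => xor (a && steaneGen 0 i) (xor (b && steaneGen 1 i) (e && steaneGen 2 i))}

/-- Steane logical basis: `steane false = |0̄⟩`, `steane true = |1̄⟩ = X^{⊗7}|0̄⟩` -/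
def steane : Bool → ((Fin 7 → Bool) → ℂ) := fun b =>
  if b then (tensMat fun _ => σx).mulVec (fun y => if y ∈ hammingC then ((Real.sqrt 8 : ℂ))⁻¹ else 0)
  else fun y => if y ∈ hammingC then ((Real.sqrt 8 : ℂ))⁻¹ else 0

-- 5-qubit code
def fiveStab : Fin 4 → Matrix (Fin 5 → Bool) (Fin 5 → Bool) ℂ :=
  ![tensMat ![σx, σz, σz, σx, 1],
    tensMat ![1, σx, σz, σz, σx],
    tensMat ![σx, 1, σx, σz, σz],
    tensMat ![σz, σx, 1, σx, σz]]

def fiveCodespace : Submodule ℂ ((Fin 5 → Bool) → ℂ) :=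
  jointFixed (Set.range fiveStab)

/-- a choice of logical basis for the 5-qubit code -/
def fiveLogical (v : Bool → ((Fin 5 → Bool) → ℂ)) : Prop :=
  (∀ b, v b ∈ fiveCodespace) ∧ (∀ b, qInner (v b) (v b) = 1) ∧
  (tensMat fun _ : Fin 5 => σz).mulVec (v false) = v false ∧
  (tensMat fun _ : Fin 5 => σz).mulVec (v true) = -(v true) ∧
  (tensMat fun _ : Fin 5 => σx).mulVec (v false) = v true

-- [[15,1,3]] Reed–Muller code
def rmBit (i : Fin 15) (j : Fin 4) : Bool := Nat.testBit (i.val + 1) j.val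

def rmXstab (j : Fin 4) : Matrix (Fin 15 → Bool) (Fin 15 → Bool) ℂ :=
  tensMat fun i => if rmBit i j then σx else 1

def rmZstab (j k : Fin 4) : Matrix (Fin 15 → Bool) (Fin 15 → Bool) ℂ :=
  tensMat fun i => if rmBit i j && rmBit i k then σz else 1

def rmCodespace : Submodule ℂ ((Fin 15 → Bool) → ℂ) :=
  jointFixed ({M | ∃ j, M = rmXstab j} ∪ {M | ∃ j k, j < k ∧ M = rmZstab j k})

/-- a choice of logical basis for the [[15,1,3]] Reed–Muller code -/
def rmLogical (w : Bool → ((Fin 15 → Bool) → ℂ)) : Prop :=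
  (∀ b, w b ∈ rmCodespace) ∧ (∀ b, qInner (w b) (w b) = 1) ∧
  (tensMat fun _ : Fin 15 => σz).mulVec (w false) = w false ∧
  (tensMat fun _ : Fin 15 => σz).mulVec (w true) = -(w true) ∧
  (tensMat fun _ : Fin 15 => σx).mulVec (w false) = w true

/-- the logical basis state `b` of the 49-qubit concatenated Steane code, i.e. the
image of `|b⟩` under `E^{⊗7} ∘ E` where `E` is the Steane encoder. -/
def steaneConcat (b : Bool) : (Fin 7 × Fin 7 → Bool) → ℂ :=
  fun y => ∑ x : Fin 7 → Bool, steane b x * ∏ m, steane (x m) (fun i => y (m, i))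

/-!
The code space is spanned by the uniform superpositions `|0̄⟩, |1̄⟩` over the cosets `D` and
`D ∆ 𝟙` of the classical concatenated code `D` (outer and inner code `C`), so the hypotheses force
`Π = |0̄⟩⟨0̄| + |1̄⟩⟨1̄|`, and `Π P Π = c Π` becomes `⟨ā|P|b̄⟩ = c δ_ab`. Writing `P = κ X^f Z^g`,
a character sum over `D` gives `⟨ā|P|b̄⟩ = κ (-1)^{b |g|}` if `f ∈ D ∆ (a ⊕ b) 𝟙` and `g ⊥ D`, and
`0` otherwise. Every word of `D ∆ 𝟙` has weight at least `3 · 3 = 9` (three outer positions carry a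
complemented inner word), and an odd-weight `g ⊥ D` has at least three odd blocks, each of weight at
least three. So for weight at most `8` the off-diagonal elements vanish and the diagonal ones agree,
while `Z` on `T × T`, with `T` the support of a weight-three logical `Z` of the Steane code, is a
logical `Z` of weight `9`.
-/

open scoped symmDiff
open Finset

section BitVectors

variable {ι κ : Type*} [Fintype ι] [Fintype κ]

def bitWeight (v : ι → Bool) : ℕ := #{i | v i}

/-- `parityChar w g = (-1) ^ |w ⊓ g|`, the character of `(ι → Bool, ∆)` determined by `g`. -/
def parityChar (w g : ι → Bool) : ℂ := ∏ i, if w i && g i then -1 else 1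

lemma parityChar_symmDiff_left (w w' g : ι → Bool) :
    parityChar (w ∆ w') g = parityChar w g * parityChar w' g := by
  rw [parityChar, parityChar, parityChar, ← prod_mul_distrib]
  refine prod_congr rfl fun i _ => ?_
  simp only [Pi.symmDiff_apply, Bool.symmDiff_eq_xor]
  cases w i <;> cases w' i <;> cases g i <;> norm_num

lemma parityChar_eq_neg_one_pow (w g : ι → Bool) :
    parityChar w g = (-1) ^ bitWeight (w ⊓ g) := by
  rw [parityChar, prod_ite, prod_const_one, mul_one, prod_const]
  rfl

lemma parityChar_eq_one_iff {w g : ι → Bool} :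
    parityChar w g = 1 ↔ Even (bitWeight (w ⊓ g)) := by
  rw [parityChar_eq_neg_one_pow, neg_one_pow_eq_one_iff_even (by norm_num)]

lemma parityChar_bot_left (g : ι → Bool) : parityChar ⊥ g = 1 := by
  simp [parityChar]

lemma parityChar_bot_right (w : ι → Bool) : parityChar w ⊥ = 1 := by
  simp [parityChar]

lemma parityChar_const_left (c : Bool) (g : ι → Bool) :
    parityChar (fun _ => c) g = if c && decide (Odd (bitWeight g)) then -1 else 1 := by
  cases c
  · exact parityChar_bot_left g
  · change parityChar ⊤ g = _
    rw [parityChar_eq_neg_one_pow, top_inf_eq, Bool.true_and]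
    split_ifs with h
    · exact (of_decide_eq_true h).neg_one_pow
    · exact (Nat.not_odd_iff_even.mp (of_decide_eq_false (eq_false_of_ne_true h))).neg_one_pow

lemma parityChar_prod (w g : ι × κ → Bool) :
    parityChar w g = ∏ i, parityChar (fun j => w (i, j)) (fun j => g (i, j)) :=
  Fintype.prod_prod_type _

lemma bitWeight_prod (v : ι × κ → Bool) :
    bitWeight v = ∑ i, bitWeight fun j => v (i, j) := by
  simp only [bitWeight, card_filter, Fintype.sum_prod_type]

lemma mul_le_bitWeight_of_blocks (v : ι × κ → Bool) (p : ι → Bool) {k l : ℕ}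
    (hp : k ≤ bitWeight p) (hv : ∀ i, p i → l ≤ bitWeight fun j => v (i, j)) :
    k * l ≤ bitWeight v :=
  calc k * l ≤ bitWeight p * l := Nat.mul_le_mul_right l hp
    _ ≤ ∑ i ∈ univ.filter (fun i => p i), bitWeight fun j => v (i, j) := by
        rw [← smul_eq_mul]
        exact card_nsmul_le_sum _ _ l fun i hi => hv i (mem_filter.mp hi).2
    _ ≤ bitWeight v := by
        rw [bitWeight_prod]
        exact sum_le_sum_of_subset (filter_subset _ _)

def blockParity (v : ι × κ → Bool) : ι → Bool :=
  fun i => decide (Odd (bitWeight fun j => v (i, j)))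

lemma odd_bitWeight_blockParity_iff (v : ι × κ → Bool) :
    Odd (bitWeight (blockParity v)) ↔ Odd (bitWeight v) := by
  rw [bitWeight_prod, odd_sum_iff_odd_card_odd]
  simp [bitWeight, blockParity]

/-- Orthogonality of characters, for a group written with `∆`. -/
lemma sum_eq_zero_of_map_symmDiff {U R : Type*} [Fintype U] [GeneralizedBooleanAlgebra U]
    [CommRing R] [IsDomain R] (χ : U → R) (hχ : ∀ u v, χ (u ∆ v) = χ u * χ v) {u₀ : U}
    (hu₀ : χ u₀ ≠ 1) : ∑ u, χ u = 0 := by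
  have hshift : ∑ u, χ u = (∑ u, χ u) * χ u₀ := by
    rw [sum_mul]
    refine (Fintype.sum_bijective (· ∆ u₀) ?_ _ _ fun u => (hχ u u₀).symm).symm
    exact Function.Involutive.bijective fun u => symmDiff_symmDiff_cancel_right u₀ u
  have : (∑ u, χ u) * (1 - χ u₀) = 0 := by linear_combination hshift
  exact (mul_eq_zero.mp this).resolve_right (sub_ne_zero.mpr hu₀.symm)

lemma sum_parityChar_comp {U : Type*} [Fintype U] [GeneralizedBooleanAlgebra U]
    (L : U → ι → Bool) (hL : ∀ u v, L (u ∆ v) = L u ∆ L v) (g : ι → Bool) :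
    ∑ u, parityChar (L u) g =
      if ∀ u, parityChar (L u) g = 1 then (Fintype.card U : ℂ) else 0 := by
  split_ifs with h
  · simp [h]
  · obtain ⟨u₀, hu₀⟩ := not_forall.mp h
    exact sum_eq_zero_of_map_symmDiff _ (fun u v => by rw [hL, parityChar_symmDiff_left]) hu₀

end BitVectors

section Pauli

variable {ι : Type*} [Fintype ι]

/-- The matrix of `X^f Z^g`: `|w⟩ ↦ (-1)^{|w ⊓ g|} |w ∆ f⟩`. -/
def xzMatrix (f g : ι → Bool) : Matrix (ι → Bool) (ι → Bool) ℂ :=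
  Matrix.of fun z w => if z = w ∆ f then parityChar w g else 0

lemma tensMat_σx : tensMat (fun _ : ι => σx) = xzMatrix ⊤ ⊥ := by
  ext z w
  simp [tensMat, xzMatrix, σx, funext_iff, prod_boole, parityChar_bot_right]

lemma σx_ne_one : σx ≠ 1 := fun h => by simpa [σx] using congr_fun₂ h false false
lemma σy_ne_one : σy ≠ 1 := fun h => by simpa [σy] using congr_fun₂ h false false
lemma σz_ne_one : σz ≠ 1 := fun h => by
  have := congr_fun₂ h true true
  norm_num [σz] at this
lemma σx_ne_σy : σx ≠ σy := fun h => by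
  simpa [σx, σy, Complex.ext_iff] using congr_fun₂ h false true
lemma σx_ne_σz : σx ≠ σz := fun h => by simpa [σx, σz] using congr_fun₂ h false false
lemma σz_ne_σy : σz ≠ σy := fun h => by simpa [σz, σy] using congr_fun₂ h false false

namespace PauliOp

def xBits (p : PauliOp ι) : ι → Bool := fun i => decide (p.fac i = σx ∨ p.fac i = σy)

def zBits (p : PauliOp ι) : ι → Bool := fun i => decide (p.fac i = σz ∨ p.fac i = σy)

/-- Each `Y = i X Z` contributes a factor `i`. -/
def xzCoeff (p : PauliOp ι) : ℂ :=
  Complex.I ^ (p.phase : ℕ) * ∏ i, if p.fac i = σy then Complex.I else 1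

lemma fac_apply (p : PauliOp ι) (i : ι) (y x : Bool) :
    p.fac i y x = (if p.fac i = σy then Complex.I else 1) *
      ((if y = xor x (p.xBits i) then 1 else 0) * (if x && p.zBits i then -1 else 1)) := by
  rcases p.isPauli i with h | h | h | h <;>
    simp only [xBits, zBits, h, σx_ne_one.symm, σy_ne_one.symm, σz_ne_one.symm, σx_ne_σy,
      σx_ne_σz, σz_ne_σy, σx_ne_σy.symm, σx_ne_σz.symm, σz_ne_σy.symm] <;>
    cases y <;> cases x <;> simp [σx, σy, σz]

lemma toMatrix_eq (p : PauliOp ι) : p.toMatrix = p.xzCoeff • xzMatrix p.xBits p.zBits := by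
  ext z w
  simp only [toMatrix, tensMat, xzMatrix, xzCoeff, Matrix.smul_apply, Matrix.of_apply,
    smul_eq_mul, fac_apply, prod_mul_distrib, prod_boole, funext_iff, Pi.symmDiff_apply,
    Bool.symmDiff_eq_xor]
  simp only [parityChar, mem_univ, forall_const]
  split_ifs <;> ring

lemma weight_eq_card (p : PauliOp ι) : p.weight = #{i | p.fac i ≠ 1} := by
  rw [weight, ← Set.ncard_coe_finset, coe_filter]
  simp

lemma bitWeight_xBits_le (p : PauliOp ι) : bitWeight p.xBits ≤ p.weight := by
  rw [weight_eq_card]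
  refine card_le_card fun i => ?_
  simp only [xBits, mem_filter, mem_univ, true_and, decide_eq_true_eq]
  rintro (h | h) <;> simp [h, σx_ne_one, σy_ne_one]

lemma bitWeight_zBits_le (p : PauliOp ι) : bitWeight p.zBits ≤ p.weight := by
  rw [weight_eq_card]
  refine card_le_card fun i => ?_
  simp only [zBits, mem_filter, mem_univ, true_and, decide_eq_true_eq]
  rintro (h | h) <;> simp [h, σz_ne_one, σy_ne_one]

def zOn (g : ι → Bool) : PauliOp ι where
  phase := 0
  fac i := if g i then σz else 1
  isPauli i := by
    by_cases h : g i <;> simp [h]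

lemma weight_zOn (g : ι → Bool) : (zOn g).weight = bitWeight g := by
  rw [weight_eq_card, bitWeight]
  congr 1
  ext i
  by_cases h : g i <;> simp [zOn, h, σz_ne_one]

lemma toMatrix_zOn (g : ι → Bool) : (zOn g).toMatrix = xzMatrix ⊥ g := by
  have hx : (zOn g).xBits = ⊥ := by
    ext i
    by_cases h : g i <;>
      simp [xBits, zOn, h, σx_ne_σz.symm, σz_ne_σy, σx_ne_one.symm, σy_ne_one.symm]
  have hz : (zOn g).zBits = g := by
    ext i
    by_cases h : g i <;> simp [zBits, zOn, h, σz_ne_one.symm, σy_ne_one.symm]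
  have hc : (zOn g).xzCoeff = 1 := by
    refine (one_mul _).trans (prod_eq_one fun i _ => ?_)
    by_cases h : g i <;> simp [zOn, h, σz_ne_σy, σy_ne_one.symm]
  rw [toMatrix_eq, hx, hz, hc, one_smul]

end PauliOp

variable [DecidableEq ι]

lemma xzMatrix_mulVec_apply (f g : ι → Bool) (v : (ι → Bool) → ℂ) (z : ι → Bool) :
    (xzMatrix f g *ᵥ v) z = parityChar (z ∆ f) g * v (z ∆ f) := by
  have hz : ∀ w, z = w ∆ f ↔ w = z ∆ f := fun w => by
    constructor <;> rintro rfl <;> rw [symmDiff_symmDiff_cancel_right]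
  simp only [mulVec, dotProduct, xzMatrix, Matrix.of_apply, ite_mul, zero_mul, hz,
    sum_ite_eq', mem_univ, if_true]

lemma dotProduct_xzMatrix_mulVec (u v : (ι → Bool) → ℂ) (f g : ι → Bool) :
    u ⬝ᵥ (xzMatrix f g *ᵥ v) = ∑ w, u (w ∆ f) * parityChar w g * v w := by
  simp only [dotProduct, mulVec, xzMatrix, Matrix.of_apply, ite_mul, zero_mul, mul_sum]
  rw [sum_comm]
  refine sum_congr rfl fun w _ => ?_
  simp only [mul_ite, mul_zero, sum_ite_eq', mem_univ, if_true]
  ring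

lemma xzMatrix_bot_bot_mulVec (v : (ι → Bool) → ℂ) : xzMatrix ⊥ ⊥ *ᵥ v = v := by
  ext z
  rw [xzMatrix_mulVec_apply, parityChar_bot_right, symmDiff_bot, one_mul]

end Pauli

section OrthProj

variable {n κ : Type*} [Fintype κ]

def orthProj (v : κ → n → ℂ) : Matrix n n ℂ := ∑ a, vecMulVec (v a) (star (v a))

lemma conjTranspose_orthProj (v : κ → n → ℂ) : (orthProj v)ᴴ = orthProj v := by
  simp [orthProj, conjTranspose_sum, conjTranspose_vecMulVec]

variable [Fintype n]

lemma orthProj_mulVec (v : κ → n → ℂ) (u : n → ℂ) :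
    orthProj v *ᵥ u = ∑ a, (star (v a) ⬝ᵥ u) • v a := by
  simp only [orthProj, Matrix.sum_mulVec, vecMulVec_mulVec, op_smul_eq_smul]

lemma orthProj_mulVec_mem_span (v : κ → n → ℂ) (u : n → ℂ) :
    orthProj v *ᵥ u ∈ Submodule.span ℂ (Set.range v) := by
  rw [orthProj_mulVec]
  exact Submodule.sum_mem _ fun a _ => Submodule.smul_mem _ _ (Submodule.subset_span ⟨a, rfl⟩)

variable [DecidableEq κ] {v : κ → n → ℂ}
  (hv : ∀ a b, star (v a) ⬝ᵥ v b = if a = b then 1 else 0)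
include hv

lemma orthProj_mulVec_self (b : κ) : orthProj v *ᵥ v b = v b := by
  simp [orthProj_mulVec, hv]

lemma dotProduct_orthProj_mulVec (a : κ) (u : n → ℂ) :
    star (v a) ⬝ᵥ (orthProj v *ᵥ u) = star (v a) ⬝ᵥ u := by
  simp [orthProj_mulVec, dotProduct_sum, hv]

lemma orthProj_mulVec_of_mem_span {u : n → ℂ} (hu : u ∈ Submodule.span ℂ (Set.range v)) :
    orthProj v *ᵥ u = u := by
  induction hu using Submodule.span_induction with
  | mem _ h => obtain ⟨b, rfl⟩ := h; exact orthProj_mulVec_self hv b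
  | zero => exact mulVec_zero _
  | add _ _ _ _ h₁ h₂ => rw [mulVec_add, h₁, h₂]
  | smul _ _ _ h => rw [mulVec_smul, h]

lemma eq_orthProj {P : Matrix n n ℂ} (hPr : ∀ u, P *ᵥ u ∈ Submodule.span ℂ (Set.range v))
    (hPf : ∀ u ∈ Submodule.span ℂ (Set.range v), P *ᵥ u = u) (hP : Pᴴ = P) :
    P = orthProj v := by
  have hPQ : P * orthProj v = orthProj v := ext_iff_mulVec.mpr fun u => by
    rw [← mulVec_mulVec, hPf _ (orthProj_mulVec_mem_span v u)]
  have hQP : orthProj v * P = P := ext_iff_mulVec.mpr fun u => by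
    rw [← mulVec_mulVec, orthProj_mulVec_of_mem_span hv (hPr u)]
  calc P = (orthProj v * P)ᴴ := by rw [hQP, hP]
    _ = orthProj v := by rw [conjTranspose_mul, hP, conjTranspose_orthProj, hPQ]

lemma orthProj_mul_mul_orthProj_eq_smul_iff (M : Matrix n n ℂ) (c : ℂ) :
    orthProj v * M * orthProj v = c • orthProj v ↔
      ∀ a b, star (v a) ⬝ᵥ (M *ᵥ v b) = if a = b then c else 0 := by
  constructor
  · intro h a b
    have := congrArg (fun N => star (v a) ⬝ᵥ (N *ᵥ v b)) h
    simpa [← mulVec_mulVec, orthProj_mulVec_self hv, dotProduct_orthProj_mulVec hv,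
      smul_mulVec, hv] using this
  · intro h
    refine ext_iff_mulVec.mpr fun u => ?_
    have hM : ∀ b, orthProj v *ᵥ (M *ᵥ v b) = c • v b := fun b => by
      simp only [orthProj_mulVec, h, ite_smul, zero_smul, sum_ite_eq', mem_univ, if_true]
    calc (orthProj v * M * orthProj v) *ᵥ u
        = orthProj v *ᵥ (M *ᵥ ∑ b, (star (v b) ⬝ᵥ u) • v b) := by
          rw [← mulVec_mulVec, ← mulVec_mulVec, orthProj_mulVec v u]
      _ = ∑ b, (star (v b) ⬝ᵥ u) • c • v b := by simp [mulVec_sum, mulVec_smul, hM]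
      _ = (c • orthProj v) *ᵥ u := by
          rw [smul_mulVec, orthProj_mulVec, smul_sum]
          simp only [smul_comm c]

end OrthProj

section SteaneCode

def hammingWord (t : Fin 3 → Bool) : Fin 7 → Bool := fun i =>
  xor (t 0 && steaneGen 0 i) (xor (t 1 && steaneGen 1 i) (t 2 && steaneGen 2 i))

lemma mem_hammingC {c : Fin 7 → Bool} : c ∈ hammingC ↔ c ∈ Set.range hammingWord := by
  constructor
  · rintro ⟨a, b, e, rfl⟩
    exact ⟨![a, b, e], rfl⟩
  · rintro ⟨t, rfl⟩
    exact ⟨t 0, t 1, t 2, rfl⟩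

set_option maxRecDepth 10000 in
lemma hammingWord_symmDiff :
    ∀ t t' : Fin 3 → Bool, hammingWord (t ∆ t') = hammingWord t ∆ hammingWord t' := by
  decide

lemma hammingWord_bot : hammingWord ⊥ = ⊥ := by decide

set_option maxRecDepth 10000 in
lemma hammingWord_symmDiff_const_inj : ∀ (t t' : Fin 3 → Bool) (c c' : Bool),
    hammingWord t ∆ (fun _ => c) = hammingWord t' ∆ (fun _ => c') → t = t' ∧ c = c' := by
  decide

lemma three_le_bitWeight_compl_hammingWord : ∀ t, 3 ≤ bitWeight (hammingWord t)ᶜ := by decide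

set_option maxRecDepth 10000 in
/-- The Steane code has distance three: its logical `Z`s are the odd words orthogonal to `C`. -/
lemma three_le_bitWeight_of_odd : ∀ g : Fin 7 → Bool,
    (∀ t, Even (bitWeight (hammingWord t ⊓ g))) → Odd (bitWeight g) → 3 ≤ bitWeight g := by
  decide

lemma steane_apply (b : Bool) (z : Fin 7 → Bool) :
    steane b z =
      if z ∆ (fun _ => b) ∈ Set.range hammingWord then (Real.sqrt 8 : ℂ)⁻¹ else 0 := by
  simp only [← mem_hammingC]
  cases b
  · rw [show (fun _ : Fin 7 => false) = ⊥ from rfl, symmDiff_bot]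
    rfl
  · rw [steane, if_pos rfl, tensMat_σx, xzMatrix_mulVec_apply, parityChar_bot_right, one_mul]
    rfl

end SteaneCode

section ConcatenatedCode

abbrev ConcatMessage := (Fin 3 → Bool) × (Fin 7 → Fin 3 → Bool)

/-- Block `m` of `concatWord (t, s)` is the inner word `hammingWord (s m)`, complemented where
the outer word `hammingWord t` has a `1`. -/
def concatWord (u : ConcatMessage) : Fin 7 × Fin 7 → Bool :=
  fun q => hammingWord (u.2 q.1) q.2 ∆ hammingWord u.1 q.1

def cosetWord (b : Bool) (u : ConcatMessage) : Fin 7 × Fin 7 → Bool :=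
  concatWord u ∆ fun _ => b

lemma concatWord_symmDiff (u v : ConcatMessage) :
    concatWord (u ∆ v) = concatWord u ∆ concatWord v := by
  ext q
  simp only [concatWord, symmDiff_fst, symmDiff_snd, Pi.symmDiff_apply, hammingWord_symmDiff]
  exact symmDiff_symmDiff_symmDiff_comm _ _ _ _

lemma concatWord_injective : Function.Injective concatWord := by
  rintro ⟨t, s⟩ ⟨t', s'⟩ h
  have hblock : ∀ m, s m = s' m ∧ hammingWord t m = hammingWord t' m := fun m =>
    hammingWord_symmDiff_const_inj _ _ _ _ <| funext fun i => congr_fun h (m, i)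
  have ht : t = t' := (hammingWord_symmDiff_const_inj t t' false false <| by
    rw [funext fun m => (hblock m).2]).1
  rw [ht, funext fun m => (hblock m).1]

lemma cosetWord_injective (b : Bool) : Function.Injective (cosetWord b) :=
  (symmDiff_left_injective _).comp concatWord_injective

lemma nine_le_bitWeight_cosetWord_true (u : ConcatMessage) :
    9 ≤ bitWeight (cosetWord true u) := by
  refine mul_le_bitWeight_of_blocks (l := 3) (cosetWord true u) (hammingWord u.1)ᶜ
    (three_le_bitWeight_compl_hammingWord u.1) fun m hm => ?_
  have hm : hammingWord u.1 m = false := by simpa using hm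
  convert three_le_bitWeight_compl_hammingWord (u.2 m) using 2
  ext i
  simp [cosetWord, concatWord, hm]

lemma bot_mem_range_cosetWord_iff (c : Bool) : ⊥ ∈ Set.range (cosetWord c) ↔ c = false := by
  cases c
  · exact iff_of_true ⟨⊥, by ext q; simp [cosetWord, concatWord, hammingWord_bot]⟩ rfl
  · refine iff_of_false (fun ⟨u, hu⟩ => ?_) (by decide)
    have := nine_le_bitWeight_cosetWord_true u
    simp [hu, bitWeight] at this

end ConcatenatedCode

section ConcatenatedSteaneStates

lemma inv_sqrt_eight_pow_eight : ((Real.sqrt 8 : ℂ)⁻¹) ^ 8 = (4096 : ℂ)⁻¹ := by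
  have : (Real.sqrt 8 : ℂ) ^ 8 = 4096 := by
    rw [show (8 : ℕ) = 2 * 4 from rfl, pow_mul, ← Complex.ofReal_pow,
      Real.sq_sqrt (by norm_num)]
    norm_num
  rw [inv_pow, this]

lemma steane_mul_prod_steane (b : Bool) (x : Fin 7 → Bool) (y : Fin 7 × Fin 7 → Bool) :
    steane b x * ∏ m, steane (x m) (fun i => y (m, i)) =
      if (x ∆ fun _ => b) ∈ Set.range hammingWord ∧
          ∀ m, ((fun i => y (m, i)) ∆ fun _ => x m) ∈ Set.range hammingWord
      then (4096 : ℂ)⁻¹ else 0 := by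
  simp only [steane_apply, Fintype.prod_ite_zero, prod_const, card_univ, Fintype.card_fin]
  rw [ite_zero_mul_ite_zero, ← pow_succ', inv_sqrt_eight_pow_eight]

lemma steaneConcat_apply (b : Bool) (y : Fin 7 × Fin 7 → Bool) :
    steaneConcat b y = if y ∈ Set.range (cosetWord b) then (4096 : ℂ)⁻¹ else 0 := by
  set Decodes : (Fin 7 → Bool) → Prop := fun x =>
    (x ∆ fun _ => b) ∈ Set.range hammingWord ∧
      ∀ m, ((fun i => y (m, i)) ∆ fun _ => x m) ∈ Set.range hammingWord
  have mem_of_decodes : ∀ x, Decodes x → y ∈ Set.range (cosetWord b) := by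
    rintro x ⟨⟨t, ht⟩, hs⟩
    choose s hs using hs
    refine ⟨(t, s), funext fun q => ?_⟩
    have h1 := congr_fun ht q.1
    have h2 := congr_fun (hs q.1) q.2
    simp only [cosetWord, concatWord, Pi.symmDiff_apply] at h1 h2 ⊢
    rw [h1, h2]
    simp
  have decodes_unique : ∀ x x', Decodes x → Decodes x' → x = x' := by
    rintro x x' ⟨-, hx⟩ ⟨-, hx'⟩
    funext m
    obtain ⟨s, hs⟩ := hx m
    obtain ⟨s', hs'⟩ := hx' m
    refine (hammingWord_symmDiff_const_inj s s' (x m) (x' m) ?_).2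
    rw [hs, hs', symmDiff_symmDiff_cancel_right, symmDiff_symmDiff_cancel_right]
  have decodes_of_eq : ∀ u : ConcatMessage,
      y = cosetWord b u → Decodes (hammingWord u.1 ∆ fun _ => b) := by
    rintro ⟨t, s⟩ rfl
    refine ⟨⟨t, (symmDiff_symmDiff_cancel_right _ _).symm⟩, fun m => ⟨s m, ?_⟩⟩
    ext i
    simp [cosetWord, concatWord]
  simp only [steaneConcat, steane_mul_prod_steane]
  split_ifs with hy
  · obtain ⟨u, hu⟩ := hy
    have hd₀ := decodes_of_eq u hu.symm
    rw [Fintype.sum_eq_single _ fun x hx => if_neg fun hd => hx (decodes_unique _ _ hd hd₀),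
      if_pos hd₀]
  · exact sum_eq_zero fun x _ => if_neg fun hd => hy (mem_of_decodes x hd)

lemma star_steaneConcat (b : Bool) : star (steaneConcat b) = steaneConcat b := by
  ext y
  rw [Pi.star_apply, steaneConcat_apply]
  split_ifs <;> simp

end ConcatenatedSteaneStates

section MatrixElements

lemma symmDiff_mem_range_cosetWord_iff (a b : Bool) (u : ConcatMessage)
    (f : Fin 7 × Fin 7 → Bool) :
    cosetWord b u ∆ f ∈ Set.range (cosetWord a) ↔ f ∈ Set.range (cosetWord (xor a b)) := by
  have key : ∀ a v, cosetWord (xor a b) (u ∆ v) = cosetWord b u ∆ cosetWord a v := by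
    intro a v
    ext q
    simp only [cosetWord, concatWord_symmDiff, Pi.symmDiff_apply, Bool.symmDiff_eq_xor]
    cases a <;> cases b <;> simp [Bool.xor_comm]
  constructor
  · rintro ⟨v, hv⟩
    exact ⟨u ∆ v, by rw [key, hv, symmDiff_symmDiff_cancel_left]⟩
  · rintro ⟨v, rfl⟩
    refine ⟨u ∆ v, ?_⟩
    simpa using key (xor a b) v

lemma steaneConcat_dotProduct_xzMatrix_mulVec (a b : Bool) (f g : Fin 7 × Fin 7 → Bool) :
    star (steaneConcat a) ⬝ᵥ (xzMatrix f g *ᵥ steaneConcat b) =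
      if f ∈ Set.range (cosetWord (xor a b)) ∧ ∀ u, parityChar (concatWord u) g = 1
      then parityChar (fun _ => b) g else 0 := by
  rw [star_steaneConcat, dotProduct_xzMatrix_mulVec,
    ← sum_preimage (cosetWord b) univ (cosetWord_injective b).injOn _ fun w _ hw => by
      rw [steaneConcat_apply b w, if_neg hw, mul_zero], preimage_univ]
  simp only [steaneConcat_apply, Set.mem_range_self, if_true, symmDiff_mem_range_cosetWord_iff]
  calc _ = (if f ∈ Set.range (cosetWord (xor a b)) then (4096 : ℂ)⁻¹ else 0) *
        parityChar (fun _ => b) g * 4096⁻¹ * ∑ u, parityChar (concatWord u) g := by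
        rw [mul_sum]
        refine sum_congr rfl fun u _ => ?_
        rw [cosetWord, parityChar_symmDiff_left]
        ring
    _ = _ := by
        rw [sum_parityChar_comp concatWord concatWord_symmDiff]
        simp only [Fintype.card_prod, Fintype.card_fun, Fintype.card_bool, Fintype.card_fin]
        split_ifs <;> simp_all
        ring

end MatrixElements

section Distance

lemma steaneConcat_orthonormal (a b : Bool) :
    star (steaneConcat a) ⬝ᵥ steaneConcat b = if a = b then 1 else 0 := by
  have h := steaneConcat_dotProduct_xzMatrix_mulVec a b ⊥ ⊥
  rw [xzMatrix_bot_bot_mulVec] at h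
  simp only [h, bot_mem_range_cosetWord_iff, parityChar_bot_right, implies_true, and_true]
  cases a <;> cases b <;> rfl

lemma parityChar_concatWord (u : ConcatMessage)
    (g : Fin 7 × Fin 7 → Bool) :
    parityChar (concatWord u) g = parityChar (hammingWord u.1) (blockParity g) *
      ∏ m, parityChar (hammingWord (u.2 m)) fun i => g (m, i) := by
  rw [parityChar_prod, mul_comm, parityChar, ← prod_mul_distrib]
  refine prod_congr rfl fun m _ => ?_
  rw [show (fun i => concatWord u (m, i)) = hammingWord (u.2 m) ∆ fun _ => hammingWord u.1 m
    from rfl, parityChar_symmDiff_left, parityChar_const_left]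
  rfl

lemma forall_parityChar_concatWord_eq_one_iff (g : Fin 7 × Fin 7 → Bool) :
    (∀ u, parityChar (concatWord u) g = 1) ↔
      (∀ t, parityChar (hammingWord t) (blockParity g) = 1) ∧
        ∀ m t, parityChar (hammingWord t) (fun i => g (m, i)) = 1 := by
  constructor
  · intro h
    refine ⟨fun t => ?_, fun m t => ?_⟩
    · simpa [parityChar_concatWord, hammingWord_bot, parityChar_bot_left] using h (t, ⊥)
    · have := h (⊥, Function.update ⊥ m t)
      rw [parityChar_concatWord, Fintype.prod_eq_single m fun m' hm' => by
        simp [Function.update_of_ne hm', hammingWord_bot, parityChar_bot_left]] at this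
      simpa [hammingWord_bot, parityChar_bot_left] using this
  · rintro ⟨hout, hin⟩ u
    rw [parityChar_concatWord, hout, prod_eq_one fun m _ => hin m _, one_mul]

/-- An odd-weight `g` would have at least three odd blocks, each of weight at least three. -/
lemma even_bitWeight_of_forall_parityChar_concatWord (g : Fin 7 × Fin 7 → Bool)
    (hg : ∀ u, parityChar (concatWord u) g = 1) (hwt : bitWeight g ≤ 8) :
    Even (bitWeight g) := by
  obtain ⟨hout, hin⟩ := (forall_parityChar_concatWord_eq_one_iff g).mp hg
  by_contra hodd
  have hodd : Odd (bitWeight g) := Nat.not_even_iff_odd.mp hodd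
  have hblocks : 3 ≤ bitWeight (blockParity g) :=
    three_le_bitWeight_of_odd _ (fun t => parityChar_eq_one_iff.mp (hout t))
      ((odd_bitWeight_blockParity_iff g).mpr hodd)
  have := mul_le_bitWeight_of_blocks g (blockParity g) hblocks fun m hm =>
    three_le_bitWeight_of_odd _ (fun t => parityChar_eq_one_iff.mp (hin m t)) (of_decide_eq_true hm)
  omega

lemma exists_steaneConcat_dotProduct_mulVec_eq_ite (p : PauliOp (Fin 7 × Fin 7))
    (hp : p.weight ≤ 8) : ∃ c, ∀ a b,
      star (steaneConcat a) ⬝ᵥ (p.toMatrix *ᵥ steaneConcat b) = if a = b then c else 0 := by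
  refine ⟨p.xzCoeff * if p.xBits ∈ Set.range (cosetWord false) ∧
    ∀ u, parityChar (concatWord u) p.zBits = 1 then 1 else 0, fun a b => ?_⟩
  rw [p.toMatrix_eq, smul_mulVec, dotProduct_smul, steaneConcat_dotProduct_xzMatrix_mulVec,
    smul_eq_mul]
  obtain rfl | hab := eq_or_ne a b
  · have hpar : (∀ u, parityChar (concatWord u) p.zBits = 1) →
        parityChar (fun _ => a) p.zBits = 1 := fun hz => by
      have := even_bitWeight_of_forall_parityChar_concatWord _ hz (p.bitWeight_zBits_le.trans hp)
      simp [parityChar_const_left, Nat.not_odd_iff_even.mpr this]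
    simp only [Bool.xor_self, if_true]
    split_ifs with h <;> simp_all
  · have hx : p.xBits ∉ Set.range (cosetWord true) := by
      rintro ⟨u, hu⟩
      have := nine_le_bitWeight_cosetWord_true u
      have := p.bitWeight_xBits_le
      rw [← hu] at *
      omega
    have hab' : xor a b = true := by cases a <;> cases b <;> simp_all
    rw [if_neg hab, hab', if_neg fun h => hx h.1, mul_zero]

end Distance

section Witness

def steaneLogicalSupport : Fin 7 → Bool := fun i => decide (i.val < 3)

def concatLogicalSupport : Fin 7 × Fin 7 → Bool :=
  fun q => steaneLogicalSupport q.1 && steaneLogicalSupport q.2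

lemma bitWeight_concatLogicalSupport : bitWeight concatLogicalSupport = 9 := by decide

set_option maxRecDepth 10000 in
lemma concatLogicalSupport_orthogonal :
    (∀ t, Even (bitWeight (hammingWord t ⊓ blockParity concatLogicalSupport))) ∧
      ∀ m t, Even (bitWeight (hammingWord t ⊓ fun i => concatLogicalSupport (m, i))) := by
  decide

lemma steaneConcat_dotProduct_zOn_mulVec (b : Bool) :
    star (steaneConcat b) ⬝ᵥ ((PauliOp.zOn concatLogicalSupport).toMatrix *ᵥ steaneConcat b) =
      if b then -1 else 1 := by
  have hg : ∀ u, parityChar (concatWord u) concatLogicalSupport = 1 :=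
    (forall_parityChar_concatWord_eq_one_iff _).mpr
      ⟨fun t => parityChar_eq_one_iff.mpr (concatLogicalSupport_orthogonal.1 t),
        fun m t => parityChar_eq_one_iff.mpr (concatLogicalSupport_orthogonal.2 m t)⟩
  have hbot : ⊥ ∈ Set.range (cosetWord (xor b b)) :=
    (bot_mem_range_cosetWord_iff _).mpr (Bool.xor_self b)
  rw [PauliOp.toMatrix_zOn, steaneConcat_dotProduct_xzMatrix_mulVec, if_pos ⟨hbot, hg⟩,
    parityChar_const_left, bitWeight_concatLogicalSupport]
  cases b <;> simp [Nat.odd_iff]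

end Witness

/-- the 49-qubit concatenated Steane code has distance exactly 9:
for `Π` the orthogonal projection onto the codespace (characterized as the Hermitian
map fixing the codespace with range inside it), every 49-qubit Pauli operator of
weight at most 8 satisfies `Π P Π = c_P Π`, while some Pauli operator of weight 9
violates this. -/
theorem stmt16 (Pm : Matrix (Fin 7 × Fin 7 → Bool) (Fin 7 × Fin 7 → Bool) ℂ)
    (hrange : ∀ u, Pm.mulVec u ∈ Submodule.span ℂ {steaneConcat false, steaneConcat true})
    (hfix : ∀ u ∈ Submodule.span ℂ {steaneConcat false, steaneConcat true},
      Pm.mulVec u = u)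
    (hherm : Pmᴴ = Pm) :
    (∀ p : PauliOp (Fin 7 × Fin 7), p.weight ≤ 8 →
      ∃ c : ℂ, Pm * p.toMatrix * Pm = c • Pm) ∧
    (∃ q : PauliOp (Fin 7 × Fin 7), q.weight = 9 ∧
      ∀ c : ℂ, Pm * q.toMatrix * Pm ≠ c • Pm) := by
  rw [← Bool.range_eq steaneConcat] at hrange hfix
  obtain rfl := eq_orthProj steaneConcat_orthonormal hrange hfix hherm
  have hKL := orthProj_mul_mul_orthProj_eq_smul_iff steaneConcat_orthonormal
  refine ⟨fun p hp => ?_, PauliOp.zOn concatLogicalSupport,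
    by rw [PauliOp.weight_zOn, bitWeight_concatLogicalSupport], fun c hc => ?_⟩
  · obtain ⟨c, hc⟩ := exists_steaneConcat_dotProduct_mulVec_eq_ite p hp
    exact ⟨c, (hKL _ c).mpr hc⟩
  · have h₀ := (hKL _ c).mp hc false false
    have h₁ := (hKL _ c).mp hc true true
    simp only [steaneConcat_dotProduct_zOn_mulVec] at h₀ h₁
    norm_num [← h₀] at h₁
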